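/- Let q be a prime power and A = 𝔽_q[T]. For every monic irreducible polynomial P ∈ A and every polynomial α ∈ A, one has C_{P-1}(α) ≡ 0 (mod P), i.e. P divides C_{P-1}(α) in A. -/
import Mathlib

open Polynomial Finset

/-- Compositional iterates of the Carlitz polynomial `C_T(x) = T·x + x^q`, so that
`carlitzTpow F n = C_{T^n}(x) ∈ (𝔽_q[T])[x]` (here `q = Fintype.card F`). -/
noncomputable def carlitzTpow (F : Type) [Field F] [Fintype F] : ℕ → Polynomial (Polynomial F)
  | 0 => X
  | n + 1 => (carlitzTpow F n).comp (Polynomial.C Polynomial.X * X + X ^ (Fintype.card F))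

/-- The Carlitz module polynomial `C_m(x) ∈ (𝔽_q[T])[x]` for `m ∈ A = 𝔽_q[T]`:
it is determined by `𝔽_q`-linearity in `m` together with
`C_{T^n}(x) = C_T(C_T(⋯ C_T(x)⋯))` (`n`-fold composition of `C_T(x) = T·x + x^q`). -/
noncomputable def carlitz (F : Type) [Field F] [Fintype F] (m : Polynomial F) :
    Polynomial (Polynomial F) :=
  m.sum fun i c => Polynomial.C (Polynomial.C c) * carlitzTpow F i

/-- Evaluation `C_m(α) ∈ 𝔽_q[T]` of the Carlitz polynomial `C_m(x)` at `α ∈ 𝔽_q[T]`. -/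
noncomputable def carlitzEval (F : Type) [Field F] [Fintype F] (m α : Polynomial F) :
    Polynomial F :=
  (carlitz F m).eval α

section Aux

variable (F : Type) [Field F] [Fintype F]

lemma carlitzTpow_succ_left (n : ℕ) :
    carlitzTpow F (n + 1) =
      (Polynomial.C Polynomial.X * X + X ^ (Fintype.card F)).comp (carlitzTpow F n) := by
  induction n with
  | zero => simp [carlitzTpow]
  | succ n ih =>
    have h : carlitzTpow F (n + 2)
        = (carlitzTpow F (n+1)).comp (Polynomial.C Polynomial.X * X + X ^ (Fintype.card F)) := by
      rw [carlitzTpow]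
    have h' : carlitzTpow F (n + 1)
        = (carlitzTpow F n).comp (Polynomial.C Polynomial.X * X + X ^ (Fintype.card F)) := by
      rw [carlitzTpow]
    rw [h, ih, comp_assoc, ← h', ih]

lemma carlitz_add (m m' : Polynomial F) :
    carlitz F (m + m') = carlitz F m + carlitz F m' := by
  unfold carlitz
  apply Polynomial.sum_add_index <;> intros <;> simp [add_mul]

lemma carlitz_one : carlitz F 1 = X := by
  unfold carlitz
  rw [← Polynomial.C_1, Polynomial.sum_C_index (by simp)]
  simp [carlitzTpow]

/-- The coefficient `c_{n,k}` of `x^{q^k}` in `C_{T^n}(x)` reduced mod `P`. -/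
noncomputable def carlitzCC (P : Polynomial F) : ℕ → ℕ → AdjoinRoot P
  | 0, 0 => 1
  | 0, _ + 1 => 0
  | n + 1, 0 => AdjoinRoot.root P * carlitzCC P n 0
  | n + 1, k + 1 =>
      AdjoinRoot.root P * carlitzCC P n (k + 1) + carlitzCC P n k ^ Fintype.card F

variable (P : Polynomial F)

lemma carlitzCC_zero_zero : carlitzCC F P 0 0 = 1 := by rw [carlitzCC]

lemma carlitzCC_zero_succ (k : ℕ) : carlitzCC F P 0 (k + 1) = 0 := by rw [carlitzCC]

lemma carlitzCC_succ_zero (n : ℕ) :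
    carlitzCC F P (n + 1) 0 = AdjoinRoot.root P * carlitzCC F P n 0 := by rw [carlitzCC]

lemma carlitzCC_succ_succ (n k : ℕ) :
    carlitzCC F P (n + 1) (k + 1)
      = AdjoinRoot.root P * carlitzCC F P n (k + 1) + carlitzCC F P n k ^ Fintype.card F := by
  rw [carlitzCC]

lemma carlitzCC_eq_zero : ∀ n k, n < k → carlitzCC F P n k = 0 := by
  intro n
  induction n with
  | zero =>
    intro k hk
    obtain ⟨j, rfl⟩ := Nat.exists_eq_succ_of_ne_zero (by omega : k ≠ 0)
    exact carlitzCC_zero_succ F P j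
  | succ n ih =>
    intro k hk
    obtain ⟨j, rfl⟩ := Nat.exists_eq_succ_of_ne_zero (by omega : k ≠ 0)
    rw [carlitzCC_succ_succ, ih _ (by omega), ih _ (by omega), mul_zero,
      zero_pow Fintype.card_ne_zero, add_zero]

lemma carlitzCC_diag : ∀ n, carlitzCC F P n n = 1 := by
  intro n
  induction n with
  | zero => rw [carlitzCC]
  | succ n ih =>
    rw [carlitzCC_succ_succ, carlitzCC_eq_zero F P n (n+1) (by omega), ih, mul_zero,
      one_pow, zero_add]

lemma carlitzCC_zero_right : ∀ n, carlitzCC F P n 0 = AdjoinRoot.root P ^ n := by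
  intro n
  induction n with
  | zero => rw [carlitzCC]; rfl
  | succ n ih => rw [carlitzCC_succ_zero, ih, pow_succ]; ring

variable [Fact (Irreducible P)]

lemma exists_frobK :
    ∃ ψ : AdjoinRoot P →+* AdjoinRoot P, ∀ x, ψ x = x ^ Fintype.card F := by
  set p := ringChar F with hp_def
  haveI : CharP F p := ringChar.charP F
  obtain ⟨e, hp, hcard⟩ := FiniteField.card F p
  haveI := Fact.mk hp
  haveI : CharP (AdjoinRoot P) p :=
    charP_of_injective_algebraMap (algebraMap F (AdjoinRoot P)).injective p
  exact ⟨iterateFrobenius (AdjoinRoot P) p e, fun x => by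
    rw [iterateFrobenius_def, ← hcard]⟩

lemma carlitzCC_succ_right (n : ℕ) : ∀ k,
    carlitzCC F P (n + 1) (k + 1)
      = AdjoinRoot.root P ^ (Fintype.card F ^ (k + 1)) * carlitzCC F P n (k + 1)
        + carlitzCC F P n k := by
  obtain ⟨ψ, hψ⟩ := exists_frobK F P
  induction n with
  | zero =>
    intro k
    cases k with
    | zero =>
      simp [carlitzCC_succ_succ, carlitzCC_zero_succ, carlitzCC_zero_zero]
    | succ k =>
      simp [carlitzCC_succ_succ, carlitzCC_zero_succ, zero_pow Fintype.card_ne_zero]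
  | succ n ih =>
    intro k
    cases k with
    | zero =>
      conv_lhs => rw [carlitzCC_succ_succ, ih 0, carlitzCC_succ_zero]
      conv_rhs => rw [carlitzCC_succ_succ, carlitzCC_succ_zero]
      rw [mul_pow]
      simp only [zero_add, pow_one]
      ring
    | succ k =>
      conv_lhs => rw [carlitzCC_succ_succ, ih (k+1), ih k]
      conv_rhs => rw [carlitzCC_succ_succ, carlitzCC_succ_succ]
      have hfr : (AdjoinRoot.root P ^ Fintype.card F ^ (k + 1) * carlitzCC F P n (k + 1)
            + carlitzCC F P n k) ^ Fintype.card F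
          = AdjoinRoot.root P ^ Fintype.card F ^ (k + 2)
              * carlitzCC F P n (k + 1) ^ Fintype.card F
            + carlitzCC F P n k ^ Fintype.card F := by
        rw [← hψ, map_add, map_mul, hψ, hψ, hψ, ← pow_mul, ← pow_succ]
      rw [hfr]
      ring

lemma eval_map_carlitzTpow (n : ℕ) (x : AdjoinRoot P) :
    ((carlitzTpow F n).map (AdjoinRoot.mk P)).eval x
      = ∑ k ∈ range (n + 1), carlitzCC F P n k * x ^ (Fintype.card F ^ k) := by
  obtain ⟨ψ, hψ⟩ := exists_frobK F P
  induction n with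
  | zero =>
    rw [carlitzTpow]
    simp [carlitzCC]
  | succ n ih =>
    rw [carlitzTpow_succ_left, Polynomial.map_comp, eval_comp, ih]
    have hg : ((Polynomial.C Polynomial.X * X + X ^ (Fintype.card F)).map (AdjoinRoot.mk P))
        = Polynomial.C (AdjoinRoot.root P) * X + X ^ (Fintype.card F) := by
      simp [Polynomial.map_add, Polynomial.map_mul, Polynomial.map_pow]
    rw [hg, eval_add, eval_mul, eval_C, eval_pow, eval_X]
    have hSq : (∑ k ∈ range (n + 1), carlitzCC F P n k * x ^ (Fintype.card F ^ k))
          ^ Fintype.card F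
        = ∑ k ∈ range (n + 1),
            carlitzCC F P n k ^ Fintype.card F * x ^ (Fintype.card F ^ (k + 1)) := by
      rw [← hψ, map_sum]
      refine Finset.sum_congr rfl fun k _ => ?_
      rw [map_mul, hψ, hψ, ← pow_mul, ← pow_succ]
    have hS2 : (∑ k ∈ range (n + 1), carlitzCC F P n k * x ^ (Fintype.card F ^ k))
        = ∑ k ∈ range (n + 2), carlitzCC F P n k * x ^ (Fintype.card F ^ k) := by
      rw [Finset.sum_range_succ (fun k => carlitzCC F P n k * x ^ (Fintype.card F ^ k)) (n+1),
        carlitzCC_eq_zero F P n (n+1) (by omega), zero_mul, add_zero]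
    rw [hSq, hS2,
      Finset.sum_range_succ' (fun k => carlitzCC F P (n+1) k * x ^ (Fintype.card F ^ k)) (n+1),
      Finset.sum_range_succ' (fun k => carlitzCC F P n k * x ^ (Fintype.card F ^ k)) (n+1)]
    simp only [carlitzCC_succ_succ, carlitzCC_succ_zero, add_mul]
    rw [Finset.sum_add_distrib, mul_add, Finset.mul_sum]
    simp only [← mul_assoc]
    ring

/-- `A_k = ∑ᵢ bᵢ c_{i,k}` : the coefficient of `x^{q^k}` in `C_P(x) mod P`,
where `P = ∑ᵢ bᵢ T^i`. -/
noncomputable def carlitzAA (k : ℕ) : AdjoinRoot P :=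
  ∑ i ∈ range (P.natDegree + 1), AdjoinRoot.mk P (Polynomial.C (P.coeff i)) * carlitzCC F P i k

lemma carlitzAA_zero : carlitzAA F P 0 = 0 := by
  unfold carlitzAA
  have h : ∀ i ∈ range (P.natDegree + 1),
      AdjoinRoot.mk P (Polynomial.C (P.coeff i)) * carlitzCC F P i 0
        = AdjoinRoot.mk P (Polynomial.C (P.coeff i) * Polynomial.X ^ i) := by
    intro i _
    rw [carlitzCC_zero_right, map_mul, map_pow, AdjoinRoot.mk_X]
  rw [Finset.sum_congr rfl h, ← map_sum]
  have hP' : ∑ i ∈ range (P.natDegree + 1), Polynomial.C (P.coeff i) * Polynomial.X ^ i = P := by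
    conv_rhs => rw [Polynomial.as_sum_range' P (P.natDegree + 1) (Nat.lt_succ_self _)]
    exact Finset.sum_congr rfl fun i _ => Polynomial.C_mul_X_pow_eq_monomial
  rw [hP', AdjoinRoot.mk_self]

lemma carlitzAA_natDegree (hP : P.Monic) : carlitzAA F P P.natDegree = 1 := by
  unfold carlitzAA
  rw [Finset.sum_eq_single P.natDegree]
  · rw [carlitzCC_diag, mul_one, hP.coeff_natDegree, map_one, map_one]
  · intro i hi hne
    rw [carlitzCC_eq_zero F P i P.natDegree
      (lt_of_le_of_ne (Nat.lt_succ_iff.1 (Finset.mem_range.1 hi)) hne), mul_zero]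
  · intro h; exact absurd (Finset.self_mem_range_succ _) h

lemma carlitzAA_rec (k : ℕ) :
    carlitzAA F P (k + 1)
        * (AdjoinRoot.root P ^ (Fintype.card F ^ (k + 1)) - AdjoinRoot.root P)
      = carlitzAA F P k ^ Fintype.card F - carlitzAA F P k := by
  obtain ⟨ψ, hψ⟩ := exists_frobK F P
  have hb : ∀ i, (AdjoinRoot.mk P (Polynomial.C (P.coeff i))) ^ Fintype.card F
      = AdjoinRoot.mk P (Polynomial.C (P.coeff i)) := by
    intro i
    rw [← map_pow, ← map_pow, FiniteField.pow_card]
  have hAq : carlitzAA F P k ^ Fintype.card F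
      = ∑ i ∈ range (P.natDegree + 1),
          AdjoinRoot.mk P (Polynomial.C (P.coeff i)) * carlitzCC F P i k ^ Fintype.card F := by
    rw [← hψ]; unfold carlitzAA; rw [map_sum]
    refine Finset.sum_congr rfl fun i _ => ?_
    rw [map_mul, hψ, hψ, hb]
  have h1 : ∑ i ∈ range (P.natDegree + 1),
        AdjoinRoot.mk P (Polynomial.C (P.coeff i)) * carlitzCC F P (i + 1) (k + 1)
      = AdjoinRoot.root P * carlitzAA F P (k + 1) + carlitzAA F P k ^ Fintype.card F := by
    rw [hAq]; unfold carlitzAA; rw [Finset.mul_sum, ← Finset.sum_add_distrib]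
    refine Finset.sum_congr rfl fun i _ => ?_
    rw [carlitzCC_succ_succ]; ring
  have h2 : ∑ i ∈ range (P.natDegree + 1),
        AdjoinRoot.mk P (Polynomial.C (P.coeff i)) * carlitzCC F P (i + 1) (k + 1)
      = AdjoinRoot.root P ^ (Fintype.card F ^ (k + 1)) * carlitzAA F P (k + 1)
          + carlitzAA F P k := by
    unfold carlitzAA; rw [Finset.mul_sum, ← Finset.sum_add_distrib]
    refine Finset.sum_congr rfl fun i _ => ?_
    rw [carlitzCC_succ_right]; ring
  have h := h1.symm.trans h2
  linear_combination -h

lemma pow_q_d (x : AdjoinRoot P) : x ^ (Fintype.card F ^ P.natDegree) = x := by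
  have hP0 : P ≠ 0 := (Fact.out : Irreducible P).ne_zero
  letI : Fintype (AdjoinRoot P) := Module.fintypeOfFintype (AdjoinRoot.powerBasis hP0).basis
  have hcard : Fintype.card (AdjoinRoot P) = Fintype.card F ^ P.natDegree := by
    rw [Module.card_fintype (AdjoinRoot.powerBasis hP0).basis, Fintype.card_fin,
      AdjoinRoot.powerBasis_dim]
  rw [← hcard]
  exact FiniteField.pow_card x

lemma root_pow_ne {k : ℕ} (h0 : k ≠ 0) (hk : k < P.natDegree) :
    AdjoinRoot.root P ^ (Fintype.card F ^ k) ≠ AdjoinRoot.root P := by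
  intro h
  have hP0 : P ≠ 0 := (Fact.out : Irreducible P).ne_zero
  haveI : CharP F (ringChar F) := ringChar.charP F
  obtain ⟨e, hp, hcard⟩ := FiniteField.card F (ringChar F)
  haveI := Fact.mk hp
  haveI : CharP (AdjoinRoot P) (ringChar F) :=
    charP_of_injective_algebraMap (algebraMap F (AdjoinRoot P)).injective _
  set ψ := iterateFrobenius (AdjoinRoot P) (ringChar F) (↑e * k) with hψdef
  have hψ : ∀ x : AdjoinRoot P, ψ x = x ^ (Fintype.card F ^ k) := fun x => by
    rw [hψdef, iterateFrobenius_def, pow_mul, ← hcard]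
  have hcomp : ψ.comp (AdjoinRoot.mk P) = AdjoinRoot.mk P := by
    apply Polynomial.ringHom_ext
    · intro a
      rw [RingHom.comp_apply, hψ, ← map_pow, ← map_pow, FiniteField.pow_card_pow]
    · rw [RingHom.comp_apply, hψ, AdjoinRoot.mk_X, h]
  have hall : ∀ x : AdjoinRoot P, x ^ (Fintype.card F ^ k) = x := by
    intro x
    obtain ⟨f, rfl⟩ := AdjoinRoot.mk_surjective x
    rw [← hψ]
    exact RingHom.congr_fun hcomp f
  letI : Fintype (AdjoinRoot P) := Module.fintypeOfFintype (AdjoinRoot.powerBasis hP0).basis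
  have hcardK : Fintype.card (AdjoinRoot P) = Fintype.card F ^ P.natDegree := by
    rw [Module.card_fintype (AdjoinRoot.powerBasis hP0).basis, Fintype.card_fin,
      AdjoinRoot.powerBasis_dim]
  have hq1 : 1 < Fintype.card F := Fintype.one_lt_card
  set pol : Polynomial (AdjoinRoot P) := X ^ (Fintype.card F ^ k) - X with hpol
  have hdeg : pol.natDegree = Fintype.card F ^ k :=
    FiniteField.X_pow_card_pow_sub_X_natDegree_eq _ h0 hq1
  have hpol0 : pol ≠ 0 := by
    intro he
    rw [he, natDegree_zero] at hdeg
    have : 0 < Fintype.card F ^ k := pow_pos (by omega) k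
    omega
  have hsub : (Finset.univ : Finset (AdjoinRoot P)).val ⊆ pol.roots := by
    intro y _
    rw [Polynomial.mem_roots hpol0]
    simp [hpol, Polynomial.IsRoot, hall y]
  have hle : Fintype.card (AdjoinRoot P) ≤ Fintype.card F ^ k := by
    calc Fintype.card (AdjoinRoot P)
        = Multiset.card (Finset.univ : Finset (AdjoinRoot P)).val := rfl
      _ ≤ Multiset.card pol.roots :=
          Multiset.card_le_card ((Multiset.le_iff_subset (Finset.univ.nodup)).2 hsub)
      _ ≤ pol.natDegree := pol.card_roots'
      _ = Fintype.card F ^ k := hdeg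
  rw [hcardK] at hle
  exact absurd hle (not_le.2 (pow_lt_pow_right₀ hq1 hk))

lemma carlitzAA_eq_zero : ∀ k, k < P.natDegree → carlitzAA F P k = 0 := by
  intro k
  induction k with
  | zero => exact fun _ => carlitzAA_zero F P
  | succ k ih =>
    intro hk
    have h := carlitzAA_rec F P k
    rw [ih (by omega), zero_pow Fintype.card_ne_zero, sub_zero] at h
    rcases mul_eq_zero.1 h with h' | h'
    · exact h'
    · exact absurd (sub_eq_zero.1 h') (root_pow_ne F P (Nat.succ_ne_zero k) hk)

lemma mk_carlitzEval (α : Polynomial F) :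
    AdjoinRoot.mk P (carlitzEval F P α)
      = ∑ k ∈ range (P.natDegree + 1),
          carlitzAA F P k * (AdjoinRoot.mk P α) ^ (Fintype.card F ^ k) := by
  unfold carlitzEval carlitz
  rw [← Polynomial.eval₂_at_apply, Polynomial.sum_def, Polynomial.eval₂_finset_sum]
  have hterm : ∀ i ∈ P.support,
      Polynomial.eval₂ (AdjoinRoot.mk P) (AdjoinRoot.mk P α)
          (Polynomial.C (Polynomial.C (P.coeff i)) * carlitzTpow F i)
        = ∑ k ∈ range (P.natDegree + 1),
            AdjoinRoot.mk P (Polynomial.C (P.coeff i)) * carlitzCC F P i k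
              * (AdjoinRoot.mk P α) ^ (Fintype.card F ^ k) := by
    intro i hi
    rw [Polynomial.eval₂_mul, Polynomial.eval₂_C, ← Polynomial.eval_map,
      eval_map_carlitzTpow, Finset.mul_sum]
    simp only [← mul_assoc]
    have hsub : range (i + 1) ⊆ range (P.natDegree + 1) := by
      apply Finset.range_subset_range.2
      have := Polynomial.le_natDegree_of_mem_supp i hi
      omega
    refine Finset.sum_subset hsub fun k _ hk => ?_
    have hik : i < k := by
      have : ¬ k < i + 1 := fun hkk => hk (Finset.mem_range.2 hkk)
      omega
    rw [carlitzCC_eq_zero F P i k hik, mul_zero, zero_mul]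
  rw [Finset.sum_congr rfl hterm,
    Finset.sum_subset (Polynomial.supp_subset_range_natDegree_succ) (by
      intro i _ hi
      simp [Polynomial.notMem_support_iff.1 hi]),
    Finset.sum_comm]
  refine Finset.sum_congr rfl fun k _ => ?_
  unfold carlitzAA
  rw [← Finset.sum_mul]

end Aux

/-- Carlitz analogue of Fermat's little theorem: for every monic irreducible `P ∈ 𝔽_q[T]`
and every `α ∈ 𝔽_q[T]`, one has `C_{P-1}(α) ≡ 0 (mod P)`. -/
theorem carlitz_fermat_little (F : Type) [Field F] [Fintype F]
    (P : Polynomial F) (hP : P.Monic) (hPirr : Irreducible P) (α : Polynomial F) :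
    P ∣ carlitzEval F (P - 1) α := by
  haveI := Fact.mk hPirr
  rw [← AdjoinRoot.mk_eq_zero]
  have hsplit : carlitz F (P - 1) = carlitz F P - X := by
    have h := carlitz_add F (P - 1) 1
    rw [sub_add_cancel, carlitz_one] at h
    rw [h]; ring
  have hmk := mk_carlitzEval F P α
  unfold carlitzEval at hmk ⊢
  rw [hsplit, eval_sub, eval_X, map_sub, hmk]
  rw [Finset.sum_eq_single P.natDegree]
  · rw [carlitzAA_natDegree F P hP, one_mul, pow_q_d F P, sub_self]
  · intro k hk hne
    rw [carlitzAA_eq_zero F P k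
      (lt_of_le_of_ne (Nat.lt_succ_iff.1 (Finset.mem_range.1 hk)) hne), zero_mul]
  · intro h; exact absurd (Finset.self_mem_range_succ _) h
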